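/- Let $\sigma\ge 1$ and $N_1\ge 1$. Suppose $H,G:\mathbb{Z}\to\mathbb{C}$ satisfy: $|G(s)|\le 1$ for all $s$, $G(s)=0$ for $0<|s|\le N_2$, and $|H(s)|\le C\exp\big(-\tfrac12|s/(8N_1)|^{(\sigma+1)/(4\sigma)}\big)$ for $|s|\ge 8N_1$. Then for all $s$ with $|s|<N_2/4$, $|H*G(s)-H(s)G(0)|\le C\sum_{|t|\ge N_2}\exp\big(-\tfrac12|t/(16N_1)|^{(\sigma+1)/(4\sigma)}\big)$; in particular, if $N_2$ is sufficiently large depending on $N_1$ and $\sigma$, then $|H*G(s)-H(s)G(0)|\le N_2^{-99}$. -/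

import Mathlib

/-!
Because `G` vanishes on `0 < |t| ≤ N₂`, the difference `H * G (s) - H s * G 0` only involves
the terms with `|t| ≥ N₂`, and for those `|s - t| ≥ |t| / 2`, so the decay of `H` at scale `8 N₁`
bounds each term by the stretched exponential `exp (-½ |t / (16 N₁)| ^ α)`. Splitting the exponent
in half bounds the tail of this summable weight beyond `N` by `exp (-¼ |N / (16 N₁)| ^ α)` times a
constant, and a stretched exponential is `o(N ^ p)` for every `p`.
-/

open Real Filter Asymptotics

theorem isLittleO_exp_neg_mul_abs_div_rpow {c α M : ℝ} (hc : 0 < c) (hα : 0 < α) (hM : M ≠ 0)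
    (p : ℝ) : (fun x : ℝ => exp (-c * |x / M| ^ α)) =o[atTop] fun x => x ^ p := by
  have hu : Tendsto (fun x : ℝ => |x / M| ^ α) atTop atTop := by
    refine (tendsto_rpow_atTop hα).comp ?_
    simp_rw [abs_div]
    exact tendsto_abs_atTop_atTop.atTop_div_const (abs_pos.2 hM)
  refine ((isLittleO_exp_neg_mul_rpow_atTop hc (p / α)).comp_tendsto hu).trans_isBigO ?_
  have hpow : (fun x : ℝ => (|x / M| ^ α) ^ (p / α)) =ᶠ[atTop] fun x => (|M| ^ p)⁻¹ * x ^ p := by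
    filter_upwards [eventually_ge_atTop 0] with x hx
    rw [← rpow_mul (abs_nonneg _), mul_div_cancel₀ _ hα.ne', abs_div, abs_of_nonneg hx,
      div_rpow hx (abs_nonneg M), div_eq_inv_mul]
  exact hpow.trans_isBigO ((isBigO_refl _ _).const_mul_left _)

theorem summable_exp_neg_mul_abs_div_rpow {c α M : ℝ} (hc : 0 < c) (hα : 0 < α) (hM : M ≠ 0) :
    Summable fun t : ℤ => exp (-c * |(t : ℝ) / M| ^ α) := by
  have hnorm : Tendsto (fun t : ℤ => ‖t‖) cofinite atTop :=
    cocompact_eq_cofinite ℤ ▸ tendsto_norm_cocompact_atTop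
  refine summable_of_isBigO (Real.summable_abs_int_rpow one_lt_two) ?_
  simpa [Function.comp_def, Int.norm_eq_abs, abs_div] using
    ((isLittleO_exp_neg_mul_abs_div_rpow hc hα hM (-2)).comp_tendsto hnorm).isBigO

theorem tsum_exp_neg_mul_abs_div_rpow_tail_le {c α M N : ℝ} (hc : 0 < c) (hα : 0 < α)
    (hM : M ≠ 0) (hN : 0 ≤ N) :
    ∑' t : {t : ℤ // N ≤ |(t : ℝ)|}, exp (-c * |(t : ℝ) / M| ^ α) ≤
      exp (-(c / 2) * |N / M| ^ α) * ∑' t : ℤ, exp (-(c / 2) * |(t : ℝ) / M| ^ α) := by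
  have hsum := summable_exp_neg_mul_abs_div_rpow (half_pos hc) hα hM
  have hsplit : ∀ t : {t : ℤ // N ≤ |(t : ℝ)|}, exp (-c * |(t : ℝ) / M| ^ α) ≤
      exp (-(c / 2) * |N / M| ^ α) * exp (-(c / 2) * |(t : ℝ) / M| ^ α) := by
    intro t
    have : |N / M| ^ α ≤ |(t : ℝ) / M| ^ α := by
      rw [abs_div, abs_div, abs_of_nonneg hN]
      gcongr
      exact t.2
    rw [← exp_add, exp_le_exp]
    nlinarith
  calc _ ≤ ∑' t : {t : ℤ // N ≤ |(t : ℝ)|},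
        exp (-(c / 2) * |N / M| ^ α) * exp (-(c / 2) * |(t : ℝ) / M| ^ α) :=
        Summable.tsum_le_tsum hsplit
          ((summable_exp_neg_mul_abs_div_rpow hc hα hM).subtype _) ((hsum.subtype _).mul_left _)
    _ ≤ _ := by
      rw [tsum_mul_left]
      gcongr
      exact hsum.tsum_subtype_le _ {t : ℤ | N ≤ |(t : ℝ)|} fun _ => (exp_pos _).le

theorem isLittleO_tsum_exp_neg_mul_abs_div_rpow_tail {c α M : ℝ} (hc : 0 < c) (hα : 0 < α)
    (hM : M ≠ 0) (p : ℝ) :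
    (fun N : ℝ => ∑' t : {t : ℤ // N ≤ |(t : ℝ)|}, exp (-c * |(t : ℝ) / M| ^ α)) =o[atTop]
      fun N => N ^ p := by
  refine IsBigO.trans_isLittleO ?_ (isLittleO_exp_neg_mul_abs_div_rpow (half_pos hc) hα hM p)
  refine IsBigO.of_bound (∑' t : ℤ, exp (-(c / 2) * |(t : ℝ) / M| ^ α)) ?_
  filter_upwards [eventually_ge_atTop 0] with N hN
  rw [norm_of_nonneg (tsum_nonneg fun _ => (exp_pos _).le), norm_of_nonneg (exp_pos _).le,
    mul_comm]
  exact tsum_exp_neg_mul_abs_div_rpow_tail_le hc hα hM hN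

theorem norm_tsum_sub_le_tsum_subtype {ι E : Type*} [NormedAddCommGroup E] [CompleteSpace E]
    {f : ι → E} {w : ι → ℝ} {s : Set ι} {i₀ : ι} (hi₀ : i₀ ∉ s)
    (hf : ∀ i ∉ s, i ≠ i₀ → f i = 0) (hfw : ∀ i ∈ s, ‖f i‖ ≤ w i)
    (hw : Summable fun i : s => w i) : ‖∑' i, f i - f i₀‖ ≤ ∑' i : s, w i := by
  classical
  set g := Function.update f i₀ 0
  have hgf : ∀ i ∈ s, g i = f i := fun i hi =>
    Function.update_of_ne (ne_of_mem_of_not_mem hi hi₀) _ _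
  have hsupp : Function.support g ⊆ s := by
    intro i hi
    by_contra his
    by_cases h : i = i₀
    · exact hi (by simp [g, h])
    · exact hi (by simp [g, h, hf i his h])
  have hgw : ∀ i : s, ‖g i‖ ≤ w i := fun i => (hgf i i.2).symm ▸ hfw i i.2
  have hg_sub : Summable fun i : s => g i := .of_norm_bounded hw hgw
  have hg : Summable g := (Subtype.val_injective.summable_iff fun i hi =>
    Function.notMem_support.1 fun h => hi ⟨⟨i, hsupp h⟩, rfl⟩).1 hg_sub
  have hfg : ∑' i, f i = f i₀ + ∑' i, g i := by
    simpa [g] using (hg.hasSum.update i₀ (f i₀)).tsum_eq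
  rw [hfg, add_sub_cancel_left, ← tsum_subtype_eq_of_support_subset hsupp]
  exact tsum_of_norm_bounded hw.hasSum hgw

theorem norm_tsum_mul_sub_le_of_gap {C c α M M' N : ℝ} (hC : 0 ≤ C) (hc : 0 < c) (hα : 0 < α)
    (hM : 0 < M) (hMM' : 2 * M ≤ M') (hN : 2 * M ≤ N) {H G : ℤ → ℂ} (hG : ∀ t, ‖G t‖ ≤ 1)
    (hGvan : ∀ t : ℤ, 0 < |(t : ℝ)| → |(t : ℝ)| ≤ N → G t = 0)
    (hH : ∀ t : ℤ, M ≤ |(t : ℝ)| → ‖H t‖ ≤ C * exp (-c * |(t : ℝ) / M| ^ α))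
    {s : ℤ} (hs : |(s : ℝ)| < N / 4) :
    ‖∑' t, H (s - t) * G t - H s * G 0‖ ≤
      C * ∑' t : {t : ℤ // N ≤ |(t : ℝ)|}, exp (-c * |(t : ℝ) / M'| ^ α) := by
  have hM' : 0 < M' := by linarith
  have hzero : (0 : ℤ) ∉ {t : ℤ | N ≤ |(t : ℝ)|} := by
    show ¬N ≤ |((0 : ℤ) : ℝ)|
    rw [Int.cast_zero, abs_zero, not_le]
    linarith
  have hvan : ∀ t ∉ {t : ℤ | N ≤ |(t : ℝ)|}, t ≠ 0 → H (s - t) * G t = 0 := by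
    intro t ht ht0
    rw [hGvan t (abs_pos.2 (Int.cast_ne_zero.2 ht0)) (not_le.1 ht).le, mul_zero]
  have htail : ∀ t ∈ {t : ℤ | N ≤ |(t : ℝ)|},
      ‖H (s - t) * G t‖ ≤ C * exp (-c * |(t : ℝ) / M'| ^ α) := by
    intro t (ht : N ≤ |(t : ℝ)|)
    have hst : |(t : ℝ)| / 2 ≤ |((s - t : ℤ) : ℝ)| := by
      rw [Int.cast_sub, abs_sub_comm]
      linarith [abs_sub_abs_le_abs_sub (t : ℝ) s]
    have hscale : |(t : ℝ) / M'| ≤ |((s - t : ℤ) : ℝ) / M| := by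
      rw [abs_div, abs_div, abs_of_pos hM, abs_of_pos hM', div_le_div_iff₀ hM' hM]
      nlinarith [abs_nonneg (t : ℝ)]
    calc ‖H (s - t) * G t‖ ≤ ‖H (s - t)‖ := by
          rw [norm_mul]
          exact mul_le_of_le_one_right (norm_nonneg _) (hG t)
      _ ≤ C * exp (-c * |((s - t : ℤ) : ℝ) / M| ^ α) := hH _ (by linarith)
      _ ≤ C * exp (-c * |(t : ℝ) / M'| ^ α) := by
          refine mul_le_mul_of_nonneg_left (exp_le_exp.2 ?_) hC
          rw [neg_mul, neg_mul, neg_le_neg_iff]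
          exact mul_le_mul_of_nonneg_left (rpow_le_rpow (abs_nonneg _) hscale hα.le) hc.le
  have key := norm_tsum_sub_le_tsum_subtype hzero hvan htail
    (((summable_exp_neg_mul_abs_div_rpow hc hα hM'.ne').mul_left C).subtype _)
  rw [sub_zero, tsum_mul_left] at key
  exact key

theorem convolution_low_frequency_stability (C σ N1 : ℝ) (hσ : 1 ≤ σ) (hN1 : 1 ≤ N1)
    (hC : 0 ≤ C) :
    ∃ N0 : ℝ, ∀ N2 : ℝ, N0 ≤ N2 → ∀ H G : ℤ → ℂ,
      (∀ s : ℤ, ‖G s‖ ≤ 1) →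
      (∀ s : ℤ, 0 < |(s : ℝ)| → |(s : ℝ)| ≤ N2 → G s = 0) →
      (∀ s : ℤ, 8 * N1 ≤ |(s : ℝ)| →
        ‖H s‖ ≤ C * Real.exp (-(1 / 2) * |(s : ℝ) / (8 * N1)| ^ ((σ + 1) / (4 * σ)))) →
      ∀ s : ℤ, |(s : ℝ)| < N2 / 4 →
        (‖(∑' t : ℤ, H (s - t) * G t) - H s * G 0‖ ≤
          C * ∑' t : {t : ℤ // N2 ≤ |(t : ℝ)|},
            Real.exp (-(1 / 2) * |((t : ℤ) : ℝ) / (16 * N1)| ^ ((σ + 1) / (4 * σ)))) ∧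
        ‖(∑' t : ℤ, H (s - t) * G t) - H s * G 0‖ ≤ N2 ^ (-99 : ℝ) := by
  have hα : 0 < (σ + 1) / (4 * σ) := div_pos (by linarith) (by linarith)
  have hM : (0 : ℝ) < 8 * N1 := by linarith
  have htail := ((isLittleO_tsum_exp_neg_mul_abs_div_rpow_tail one_half_pos hα
    (by linarith : (16 * N1 : ℝ) ≠ 0) (-99)).const_mul_left C).bound one_pos
  obtain ⟨N0, hN0⟩ := eventually_atTop.1 (htail.and (eventually_ge_atTop (2 * (8 * N1))))
  refine ⟨N0, fun N2 hN2 H G hG hGvan hH s hs => ?_⟩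
  obtain ⟨hsmall, hgap⟩ := hN0 N2 hN2
  have hconv := norm_tsum_mul_sub_le_of_gap (M' := 16 * N1) hC one_half_pos hα hM (by linarith)
    hgap hG hGvan hH hs
  refine ⟨hconv, hconv.trans ?_⟩
  rw [one_mul, norm_of_nonneg (rpow_nonneg (by linarith) _)] at hsmall
  exact (le_abs_self _).trans hsmall
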